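/- arXiv:2404.12198 — 3 statements merged into one kernel-verified Lean document; each statement's English description precedes it below -/
import Mathlib

section
/- Let R > 0, r₀ > 0, n ∈ ℕ, let Λ ⊆ ℝⁿ be open and K ⊆ Λ be such that K is contained in the closed ball of radius R centred at 0 and, for every p ∈ K, the open ball of radius r₀ centred at p is contained in Λ. Let B be a real Banach space and G : Λ → B a map. Assume: (i) the restriction of G to K is injective; (ii) there is a modulus of continuity ω₀ such that |x₁ − x₂| ≤ ω₀(‖G(x₁) − G(x₂)‖_B) for all x₁, x₂ ∈ K; (iii) G is Fréchet differentiable on Λ with derivative DG; (iv) there is a modulus of continuity ω₁ such that ‖DG(x) − DG(y)‖_{L(ℝⁿ,B)} ≤ ω₁(|x − y|) for all x, y ∈ Λ; (v) there exists m₀ > 0 such that ‖DG(x)[y]‖_B ≥ m₀ for every x ∈ K and every y ∈ ℝⁿ with |y| = 1. Then for all x₁, x₂ ∈ K one has |x₁ − x₂| ≤ C ‖G(x₁) − G(x₂)‖_B, where C = max{ 2R / ω₀⁻¹(δ₁), 2/m₀ }, with δ₀ = ω₁⁻¹(m₀/2) and δ₁ = (1/2) min{δ₀, r₀}. -/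
/-- A modulus of continuity: a function `ω : [0,∞) → [0,∞)` that is continuous,
strictly increasing, unbounded, and satisfies `ω 0 = 0`. -/
def IsModulusOfContinuity (ω : ℝ → ℝ) : Prop :=
  ContinuousOn ω (Set.Ici 0) ∧ StrictMonoOn ω (Set.Ici 0) ∧ ω 0 = 0 ∧
    ∀ y : ℝ, ∃ x : ℝ, 0 ≤ x ∧ y ≤ ω x

/-- The generalized inverse `(ω⁻¹)_*(y) = inf {x ∈ [0,∞) | ω x ≥ y}`. -/
noncomputable def modInv (ω : ℝ → ℝ) (y : ℝ) : ℝ :=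
  sInf {x : ℝ | 0 ≤ x ∧ y ≤ ω x}

lemma modInv_pos {ω : ℝ → ℝ} (hω : IsModulusOfContinuity ω) {c : ℝ} (hc : 0 < c) :
    0 < modInv ω c := by
  obtain ⟨hcont, hmono, h0, hub⟩ := hω
  have h := hcont 0 Set.self_mem_Ici
  rw [ContinuousWithinAt, h0] at h
  have hmem : {x : ℝ | ω x < c} ∈ nhdsWithin 0 (Set.Ici 0) := h (Iio_mem_nhds hc)
  rw [Metric.mem_nhdsWithin_iff] at hmem
  obtain ⟨ε, hε, hsub⟩ := hmem
  obtain ⟨x₀, hx₀, hx₀'⟩ := hub c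
  have : ε / 2 ≤ modInv ω c := by
    apply le_csInf
    · exact ⟨x₀, hx₀, hx₀'⟩
    rintro b ⟨hb0, hbc⟩
    by_contra hlt
    push_neg at hlt
    have : b ∈ {x : ℝ | ω x < c} := by
      apply hsub
      constructor
      · simp [Real.dist_eq, abs_of_nonneg hb0]; linarith
      · exact hb0
    simp only [Set.mem_setOf_eq] at this
    linarith
  linarith

lemma lt_of_lt_modInv {ω : ℝ → ℝ} {c t : ℝ}
    (ht : 0 ≤ t) (h : t < modInv ω c) : ω t < c := by
  by_contra hle
  push_neg at hle
  have : modInv ω c ≤ t := csInf_le ⟨0, fun x hx => hx.1⟩ ⟨ht, hle⟩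
  linarith

/-- Quantitative inverse function theorem (Lemma 3.5, from [BV2006, Proposition 5]). -/
theorem lipschitz_stability_from_frechet
    {n : ℕ} {B : Type*} [NormedAddCommGroup B] [NormedSpace ℝ B] [CompleteSpace B]
    (R r₀ : ℝ) (hR : 0 < R) (hr₀ : 0 < r₀)
    (Λ K : Set (EuclideanSpace ℝ (Fin n))) (hΛ : IsOpen Λ) (hKΛ : K ⊆ Λ)
    (hKR : K ⊆ Metric.closedBall 0 R)
    (hKr : ∀ p ∈ K, Metric.ball p r₀ ⊆ Λ)
    (G : EuclideanSpace ℝ (Fin n) → B)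
    (DG : EuclideanSpace ℝ (Fin n) → (EuclideanSpace ℝ (Fin n) →L[ℝ] B))
    (ω₀ ω₁ : ℝ → ℝ)
    (hω₀ : IsModulusOfContinuity ω₀) (hω₁ : IsModulusOfContinuity ω₁)
    -- (i) the restriction of `G` to `K` is injective
    (hinj : Set.InjOn G K)
    -- (ii) the inverse of `G` on `K` is uniformly continuous with modulus `ω₀`
    (hinvcont : ∀ x₁ ∈ K, ∀ x₂ ∈ K, ‖x₁ - x₂‖ ≤ ω₀ ‖G x₁ - G x₂‖)
    -- (iii) `G` is Fréchet differentiable on `Λ` with derivative `DG`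
    (hdiff : ∀ x ∈ Λ, HasFDerivAt G (DG x) x)
    -- (iv) `DG` is uniformly continuous with modulus `ω₁`
    (hDGcont : ∀ x ∈ Λ, ∀ y ∈ Λ, ‖DG x - DG y‖ ≤ ω₁ ‖x - y‖)
    -- (v) lower bound on the derivative over `K` and unit directions
    (m₀ : ℝ) (hm₀ : 0 < m₀)
    (hlow : ∀ x ∈ K, ∀ y : EuclideanSpace ℝ (Fin n), ‖y‖ = 1 → m₀ ≤ ‖DG x y‖) :
    ∀ x₁ ∈ K, ∀ x₂ ∈ K,
      ‖x₁ - x₂‖ ≤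
        max (2 * R / modInv ω₀ (1 / 2 * min (modInv ω₁ (m₀ / 2)) r₀)) (2 / m₀) *
          ‖G x₁ - G x₂‖ := by
  set δ₀ := modInv ω₁ (m₀ / 2) with hδ₀def
  have hδ₀ : 0 < δ₀ := modInv_pos hω₁ (by linarith)
  set δ₁ := 1 / 2 * min δ₀ r₀ with hδ₁def
  have hδ₁ : 0 < δ₁ := by
    have := lt_min hδ₀ hr₀
    rw [hδ₁def]; positivity
  set a := modInv ω₀ δ₁ with hadef
  have ha : 0 < a := modInv_pos hω₀ hδ₁
  set C := max (2 * R / a) (2 / m₀) with hCdef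
  have hC1 : 2 * R / a ≤ C := le_max_left _ _
  have hC2 : 2 / m₀ ≤ C := le_max_right _ _
  intro x₁ hx₁ x₂ hx₂
  set t := ‖G x₁ - G x₂‖ with htdef
  have ht0 : 0 ≤ t := norm_nonneg _
  by_cases hca : a ≤ t
  · -- far apart in image: use diameter bound
    have h1 : ‖x₁‖ ≤ R := by
      have := hKR hx₁; simpa [Metric.mem_closedBall, dist_zero_right] using this
    have h2 : ‖x₂‖ ≤ R := by
      have := hKR hx₂; simpa [Metric.mem_closedBall, dist_zero_right] using this
    have hd : ‖x₁ - x₂‖ ≤ 2 * R := by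
      calc ‖x₁ - x₂‖ ≤ ‖x₁‖ + ‖x₂‖ := norm_sub_le _ _
        _ ≤ 2 * R := by linarith
    have : 2 * R ≤ C * t := by
      calc 2 * R = (2 * R / a) * a := by field_simp
        _ ≤ (2 * R / a) * t := by
            apply mul_le_mul_of_nonneg_left hca
            positivity
        _ ≤ C * t := mul_le_mul_of_nonneg_right hC1 ht0
    linarith
  · push_neg at hca
    have hω₀t : ω₀ t < δ₁ := lt_of_lt_modInv ht0 hca
    have hd : ‖x₁ - x₂‖ < δ₁ := lt_of_le_of_lt (hinvcont x₁ hx₁ x₂ hx₂) hω₀t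
    have hδ₁r : δ₁ < r₀ := by
      rw [hδ₁def]
      have : min δ₀ r₀ ≤ r₀ := min_le_right _ _
      linarith
    have hδ₁δ₀ : δ₁ < δ₀ := by
      rw [hδ₁def]
      have : min δ₀ r₀ ≤ δ₀ := min_le_left _ _
      linarith
    -- the segment lies in the ball around x₁
    have hseg : segment ℝ x₁ x₂ ⊆ Metric.closedBall x₁ ‖x₁ - x₂‖ := by
      apply (convex_closedBall _ _).segment_subset
      · simp
      · simp [Metric.mem_closedBall, dist_comm, dist_eq_norm]
    have hsegΛ : segment ℝ x₁ x₂ ⊆ Λ := by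
      intro x hx
      apply hKr x₁ hx₁
      have := hseg hx
      rw [Metric.mem_closedBall] at this
      rw [Metric.mem_ball]
      linarith
    -- norm bound on DG x - DG x₁ on the segment
    have hbound : ∀ x ∈ segment ℝ x₁ x₂, ‖DG x - DG x₁‖ ≤ m₀ / 2 := by
      intro x hx
      have hxx₁ : ‖x - x₁‖ ≤ ‖x₁ - x₂‖ := by
        have := hseg hx
        rwa [Metric.mem_closedBall, dist_eq_norm] at this
      have hlt : ‖x - x₁‖ < δ₀ := lt_of_le_of_lt (lt_of_le_of_lt hxx₁ hd).le hδ₁δ₀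
      have : ω₁ ‖x - x₁‖ < m₀ / 2 := lt_of_lt_modInv (norm_nonneg _) hlt
      exact le_of_lt (lt_of_le_of_lt (hDGcont x (hsegΛ hx) x₁ (hKΛ hx₁)) this)
    -- mean value inequality for F = G - DG x₁
    have hF : ∀ x ∈ segment ℝ x₁ x₂,
        HasFDerivWithinAt (fun z => G z - DG x₁ z) (DG x - DG x₁) (segment ℝ x₁ x₂) x := by
      intro x hx
      exact ((hdiff x (hsegΛ hx)).sub ((DG x₁).hasFDerivAt)).hasFDerivWithinAt
    have hmv := (convex_segment x₁ x₂).norm_image_sub_le_of_norm_hasFDerivWithin_le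
      hF hbound (right_mem_segment ℝ x₁ x₂) (left_mem_segment ℝ x₁ x₂)
    -- hmv : ‖(G x₁ - DG x₁ x₁) - (G x₂ - DG x₁ x₂)‖ ≤ m₀/2 * ‖x₁ - x₂‖
    have hlin : m₀ * ‖x₁ - x₂‖ ≤ ‖DG x₁ (x₁ - x₂)‖ := by
      rcases eq_or_ne x₁ x₂ with h | h
      · simp [h]
      · have hne : ‖x₁ - x₂‖ ≠ 0 := by simp [sub_ne_zero.mpr h]
        have hnpos : 0 < ‖x₁ - x₂‖ := lt_of_le_of_ne (norm_nonneg _) (Ne.symm hne)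
        have hy : ‖(‖x₁ - x₂‖⁻¹ • (x₁ - x₂) : EuclideanSpace ℝ (Fin n))‖ = 1 := by
          rw [norm_smul, norm_inv, norm_norm, inv_mul_cancel₀ hne]
        have := hlow x₁ hx₁ _ hy
        rw [map_smul, norm_smul, norm_inv, norm_norm] at this
        calc m₀ * ‖x₁ - x₂‖ ≤ (‖x₁ - x₂‖⁻¹ * ‖DG x₁ (x₁ - x₂)‖) * ‖x₁ - x₂‖ := by nlinarith
          _ = ‖DG x₁ (x₁ - x₂)‖ := by field_simp
    have hkey : m₀ / 2 * ‖x₁ - x₂‖ ≤ t := by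
      have expand : (G x₁ - DG x₁ x₁) - (G x₂ - DG x₁ x₂) = (G x₁ - G x₂) - DG x₁ (x₁ - x₂) := by
        rw [map_sub]; abel
      rw [expand] at hmv
      have h1 := norm_sub_le ((G x₁ - G x₂) - DG x₁ (x₁ - x₂)) (G x₁ - G x₂)
      have h2 : (G x₁ - G x₂) - DG x₁ (x₁ - x₂) - (G x₁ - G x₂) = -(DG x₁ (x₁ - x₂)) := by
        abel
      rw [h2, norm_neg] at h1
      linarith
    have : ‖x₁ - x₂‖ ≤ 2 / m₀ * t := by
      rw [div_mul_eq_mul_div, le_div_iff₀ hm₀]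
      linarith
    calc ‖x₁ - x₂‖ ≤ 2 / m₀ * t := this
      _ ≤ C * t := mul_le_mul_of_nonneg_right hC2 ht0
end

section
/- Let T > 0 and c > 0, and let l : [0,T] → ℝ be twice continuously differentiable and satisfy the differential inequality l''(t) + c·|l'(t)| + c ≥ 0 for all t ∈ (0,T). Then there exists γ ∈ {c, −c} such that for every t ∈ [0,T]: l(t) ≤ l(0)·(e^{−γt} − e^{−γT})/(1 − e^{−γT}) + l(T)·(1 − e^{−γt})/(1 − e^{−γT}) + 2e^{cT}/c. -/
open Real Set Filter Topology


noncomputable def bar (γ c T A C : ℝ) : ℝ → ℝ := fun s =>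
  A * Real.exp (-γ * s) + C
    + (Real.exp (c * T) / c) * (2 - Real.exp (-c * s) - Real.exp (c * (s - T)))

noncomputable def bar' (γ c T A : ℝ) : ℝ → ℝ := fun s =>
  -γ * A * Real.exp (-γ * s)
    + (Real.exp (c * T) / c) * (c * Real.exp (-c * s) - c * Real.exp (c * (s - T)))

noncomputable def bar'' (γ c T A : ℝ) : ℝ → ℝ := fun s =>
  γ ^ 2 * A * Real.exp (-γ * s)
    + (Real.exp (c * T) / c) * (-(c ^ 2) * Real.exp (-c * s) - c ^ 2 * Real.exp (c * (s - T)))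

lemma exp_deriv_aux (a d : ℝ) (t : ℝ) :
    HasDerivAt (fun s : ℝ => Real.exp (a * (s - d))) (a * Real.exp (a * (t - d))) t := by
  have h : HasDerivAt (fun s : ℝ => a * (s - d)) a t := by
    simpa using ((hasDerivAt_id t).sub_const d).const_mul a
  simpa [mul_comm] using h.exp

lemma exp_deriv_aux' (a : ℝ) (t : ℝ) :
    HasDerivAt (fun s : ℝ => Real.exp (a * s)) (a * Real.exp (a * t)) t := by
  simpa using exp_deriv_aux a 0 t

lemma bar_deriv (γ c T A C : ℝ) (t : ℝ) :
    HasDerivAt (bar γ c T A C) (bar' γ c T A t) t := by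
  have e1 := (exp_deriv_aux' (-γ) t).const_mul A
  have e2 := exp_deriv_aux' (-c) t
  have e3 := exp_deriv_aux c T t
  have inner := ((hasDerivAt_const t (2:ℝ)).sub e2).sub e3
  have h := (e1.add_const C).add (inner.const_mul (Real.exp (c * T) / c))
  refine HasDerivAt.congr_deriv (f := bar γ c T A C) h ?_
  simp only [bar']
  ring

lemma bar_deriv2 (γ c T A : ℝ) (t : ℝ) :
    HasDerivAt (bar' γ c T A) (bar'' γ c T A t) t := by
  have e1 := (exp_deriv_aux' (-γ) t).const_mul (-γ * A)
  have e2 := (exp_deriv_aux' (-c) t).const_mul c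
  have e3 := (exp_deriv_aux c T t).const_mul c
  have h := e1.add ((e2.sub e3).const_mul (Real.exp (c * T) / c))
  refine HasDerivAt.congr_deriv (f := bar' γ c T A) h ?_
  simp only [bar'']
  ring

lemma bar_key (γ c T A : ℝ) (hc : 0 < c) (hγ : γ = c ∨ γ = -c) (hA : A ≤ 0)
    (t : ℝ) (ht : t ∈ Set.Icc 0 T) :
    bar'' γ c T A t + c * |bar' γ c T A t| + c ≤ -c := by
  simp only [bar', bar'']
  set K := Real.exp (c * T) / c with hKdef
  set x := Real.exp (-c * t) with hxdef
  set y := Real.exp (c * (t - T)) with hydef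
  set E := Real.exp (-γ * t) with hEdef
  have hE : 0 < E := Real.exp_pos _
  have hK : 0 < K := div_pos (Real.exp_pos _) hc
  have hx : Real.exp (-c * T) ≤ x := Real.exp_le_exp.mpr (by nlinarith [ht.2])
  have hy : Real.exp (-c * T) ≤ y := Real.exp_le_exp.mpr (by nlinarith [ht.1])
  have hγ2 : γ ^ 2 = c ^ 2 := by rcases hγ with rfl | rfl <;> ring
  have hγabs : |γ| = c := by
    rcases hγ with rfl | rfl <;> simp [abs_of_pos hc, abs_of_neg, hc, abs_neg]
  have hK2 : K * c ^ 2 * Real.exp (-c * T) = c := by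
    rw [hKdef, neg_mul, Real.exp_neg]
    field_simp
  have habs : |(-γ * A * E + K * (c * x - c * y))| ≤ c * (-A) * E + K * c * |x - y| := by
    calc |(-γ * A * E + K * (c * x - c * y))|
        ≤ |(-γ * A * E)| + |K * (c * x - c * y)| := abs_add_le _ _
      _ = c * (-A) * E + K * c * |x - y| := by
          rw [abs_mul, abs_mul, abs_mul, abs_neg, hγabs, abs_of_nonpos hA,
            abs_of_pos hE, abs_of_pos hK]
          have : |c * x - c * y| = c * |x - y| := by
            rw [← mul_sub, abs_mul, abs_of_pos hc]
          rw [this]; ring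
  have habs2 : |x - y| - x - y ≤ -2 * Real.exp (-c * T) := by
    rcases abs_cases (x - y) with ⟨h1, _⟩ | ⟨h1, _⟩ <;> linarith
  have fact1 : c * |(-γ * A * E + K * (c * x - c * y))| ≤ c * (c * (-A) * E + K * c * |x - y|) :=
    mul_le_mul_of_nonneg_left habs hc.le
  have fact2 : K * c ^ 2 * (|x - y| - x - y) ≤ K * c ^ 2 * (-2 * Real.exp (-c * T)) :=
    mul_le_mul_of_nonneg_left habs2 (by positivity)
  rw [hγ2]
  nlinarith [fact1, fact2, hK2]

lemma boundary_max (a b : ℝ) (hab : a < b) (f f' f'' : ℝ → ℝ)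
    (hfc : ContinuousOn f (Set.Icc a b))
    (hf : ∀ t ∈ Set.Ioo a b, HasDerivAt f (f' t) t)
    (hf' : ∀ t ∈ Set.Ioo a b, HasDerivAt f' (f'' t) t)
    (hkey : ∀ t ∈ Set.Ioo a b, f' t = 0 → 0 < f'' t) :
    ∀ t ∈ Set.Icc a b, f t ≤ max (f a) (f b) := by
  obtain ⟨t0, ht0, hmax⟩ := isCompact_Icc.exists_isMaxOn (Set.nonempty_Icc.mpr hab.le) hfc
  have hmax' := isMaxOn_iff.mp hmax
  rcases eq_or_lt_of_le ht0.1 with h0 | h0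
  · intro t ht
    exact le_trans (h0 ▸ hmax' t ht) (le_max_left _ _)
  rcases eq_or_lt_of_le ht0.2 with hT | hT
  · intro t ht
    exact le_trans (hT ▸ hmax' t ht) (le_max_right _ _)
  exfalso
  have ht0' : t0 ∈ Set.Ioo a b := ⟨h0, hT⟩
  have hloc : IsLocalMax f t0 := hmax.isLocalMax (Icc_mem_nhds h0 hT)
  have hzero : f' t0 = 0 := hloc.hasDerivAt_eq_zero (hf t0 ht0')
  have hpos : 0 < f'' t0 := hkey t0 ht0' hzero
  have hslope : Filter.Tendsto (slope f' t0) (𝓝[≠] t0) (𝓝 (f'' t0)) :=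
    hasDerivAt_iff_tendsto_slope.mp (hf' t0 ht0')
  have hev : ∀ᶠ x in 𝓝[>] t0, 0 < slope f' t0 x :=
    (hslope.mono_left (nhdsWithin_mono _ fun x hx => ne_of_gt hx)).eventually
      (eventually_gt_nhds hpos)
  have hev2 : ∀ᶠ x in 𝓝[>] t0, 0 < f' x := by
    filter_upwards [hev, self_mem_nhdsWithin] with x hx hx'
    have hxt : (0:ℝ) < x - t0 := sub_pos.mpr hx'
    rw [slope_def_field, hzero, sub_zero] at hx
    rcases div_pos_iff.mp hx with ⟨h, _⟩ | ⟨_, h⟩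
    · exact h
    · linarith
  obtain ⟨u, hu, hsub⟩ := mem_nhdsGT_iff_exists_Ioo_subset.mp hev2
  set d := min u b with hd
  have htd : t0 < d := lt_min hu hT
  have hdb : d ≤ b := min_le_right _ _
  obtain ⟨v, hv, hveq⟩ := exists_hasDerivAt_eq_slope f f' htd
      (hfc.mono (Set.Icc_subset_Icc (le_of_lt h0) hdb))
      (fun x hx => hf x ⟨lt_trans h0 hx.1, lt_of_lt_of_le hx.2 hdb⟩)
  have hgv : 0 < f' v := hsub ⟨hv.1, lt_of_lt_of_le hv.2 (min_le_left _ _)⟩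
  rw [hveq] at hgv
  have hdpos : (0:ℝ) < d - t0 := sub_pos.mpr htd
  have hnum : 0 < f d - f t0 := by
    have := mul_pos hgv hdpos
    rwa [div_mul_cancel₀ _ (ne_of_gt hdpos)] at this
  have hfd : f d ≤ f t0 := hmax' d ⟨le_trans ht0.1 htd.le, hdb⟩
  linarith

lemma aux_case (T c : ℝ) (hT : 0 < T) (hc : 0 < c)
    (l l' l'' : ℝ → ℝ)
    (hl : ∀ t ∈ Set.Icc 0 T, HasDerivWithinAt l (l' t) (Set.Icc 0 T) t)
    (hl' : ∀ t ∈ Set.Icc 0 T, HasDerivWithinAt l' (l'' t) (Set.Icc 0 T) t)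
    (hineq : ∀ t ∈ Set.Ioo 0 T, 0 ≤ l'' t + c * |l' t| + c)
    (γ : ℝ) (hγ : γ = c ∨ γ = -c)
    (hA : (l 0 - l T) / (1 - Real.exp (-γ * T)) ≤ 0) :
    ∀ t ∈ Set.Icc 0 T,
      l t ≤ l 0 * ((Real.exp (-γ * t) - Real.exp (-γ * T)) / (1 - Real.exp (-γ * T)))
          + l T * ((1 - Real.exp (-γ * t)) / (1 - Real.exp (-γ * T)))
          + 2 * Real.exp (c * T) / c := by
  have hγ0 : γ ≠ 0 := by
    rcases hγ with rfl | rfl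
    · exact hc.ne'
    · exact neg_ne_zero.mpr hc.ne'
  have hD : (1 : ℝ) - Real.exp (-γ * T) ≠ 0 := by
    intro h
    have h1 : Real.exp (-γ * T) = 1 := by linarith
    have h2 : -γ * T = 0 := Real.exp_injective (by rw [h1, Real.exp_zero])
    have := mul_ne_zero (neg_ne_zero.mpr hγ0) hT.ne'
    exact this h2
  set A := (l 0 - l T) / (1 - Real.exp (-γ * T)) with hAdef
  set K := Real.exp (c * T) / c with hKdef
  set C := l 0 - A with hCdef
  have hK : 0 < K := div_pos (Real.exp_pos _) hc
  -- continuity of l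
  have hlc : ContinuousOn l (Set.Icc 0 T) := fun t ht => (hl t ht).continuousWithinAt
  have hbarc : Continuous (bar γ c T A C) := by
    unfold bar; fun_prop
  -- max principle for f = l - bar
  have hmain := boundary_max 0 T hT (fun s => l s - bar γ c T A C s)
      (fun s => l' s - bar' γ c T A s) (fun s => l'' s - bar'' γ c T A s)
      (hlc.sub hbarc.continuousOn)
      (fun t ht => ((hl t (Set.Ioo_subset_Icc_self ht)).hasDerivAt
          (Icc_mem_nhds ht.1 ht.2)).sub (bar_deriv γ c T A C t))
      (fun t ht => ((hl' t (Set.Ioo_subset_Icc_self ht)).hasDerivAt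
          (Icc_mem_nhds ht.1 ht.2)).sub (bar_deriv2 γ c T A t))
      (by
        intro t ht h0
        have heq : l' t = bar' γ c T A t := by linarith [sub_eq_zero.mp h0]
        have h1 := hineq t ht
        rw [heq] at h1
        have h2 := bar_key γ c T A hc hγ hA t (Set.Ioo_subset_Icc_self ht)
        show 0 < l'' t - bar'' γ c T A t
        linarith)
  -- boundary values
  have hecT : Real.exp (-c * T) ≤ 1 := by
    rw [Real.exp_le_one_iff]; nlinarith
  have e0 : Real.exp (c * (0 - T)) = Real.exp (-c * T) := by norm_num
  have hb0 : l 0 - bar γ c T A C 0 ≤ 0 := by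
    simp only [bar, hCdef, mul_zero, Real.exp_zero, e0]
    nlinarith [hK, hecT, mul_nonneg hK.le (by linarith : (0:ℝ) ≤ 1 - Real.exp (-c * T))]
  have hbT : l T - bar γ c T A C T ≤ 0 := by
    have hAD : A * (1 - Real.exp (-γ * T)) = l 0 - l T := div_mul_cancel₀ _ hD
    simp only [bar, hCdef, sub_self, mul_zero, Real.exp_zero]
    nlinarith [hAD, hK, hecT,
      mul_nonneg hK.le (by linarith : (0:ℝ) ≤ 1 - Real.exp (-c * T))]
  -- conclude
  intro t ht
  have hbound : l t - bar γ c T A C t ≤ 0 := by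
    have := hmain t ht
    have := max_le hb0 hbT
    calc l t - bar γ c T A C t ≤ max (l 0 - bar γ c T A C 0) (l T - bar γ c T A C T) :=
          hmain t ht
      _ ≤ 0 := max_le hb0 hbT
  have hpart1 : A * Real.exp (-γ * t) + C
      = l 0 * ((Real.exp (-γ * t) - Real.exp (-γ * T)) / (1 - Real.exp (-γ * T)))
        + l T * ((1 - Real.exp (-γ * t)) / (1 - Real.exp (-γ * T))) := by
    have hD2 : (1:ℝ) - Real.exp (-(γ * T)) ≠ 0 := by simpa [neg_mul] using hD
    rw [hCdef, hAdef]
    field_simp [hD, hD2]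
    ring
  have hpart2 : K * (2 - Real.exp (-c * t) - Real.exp (c * (t - T)))
      ≤ 2 * Real.exp (c * T) / c := by
    have h2K : 2 * Real.exp (c * T) / c = 2 * K := by rw [hKdef]; ring
    rw [h2K]
    nlinarith [Real.exp_pos (-c * t), Real.exp_pos (c * (t - T)), hK]
  have hbar : bar γ c T A C t = A * Real.exp (-γ * t) + C
      + K * (2 - Real.exp (-c * t) - Real.exp (c * (t - T))) := rfl
  linarith [hbound, hpart1.le, hpart1.ge, hpart2, hbar.le, hbar.ge]




/-- If `l` is twice continuously differentiable on `[0,T]` and satisfies the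
differential inequality `l'' + c|l'| + c ≥ 0` on `(0,T)`, then `l` is bounded above
by the explicit exponential interpolation of its boundary values, up to `2e^{cT}/c`,
for some `γ ∈ {c, -c}`. -/
theorem log_convexity_differential_inequality
    (T c : ℝ) (hT : 0 < T) (hc : 0 < c)
    (l l' l'' : ℝ → ℝ)
    (hl : ∀ t ∈ Set.Icc 0 T, HasDerivWithinAt l (l' t) (Set.Icc 0 T) t)
    (hl' : ∀ t ∈ Set.Icc 0 T, HasDerivWithinAt l' (l'' t) (Set.Icc 0 T) t)
    (hl'' : ContinuousOn l'' (Set.Icc 0 T))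
    (hineq : ∀ t ∈ Set.Ioo 0 T, 0 ≤ l'' t + c * |l' t| + c) :
    ∃ γ : ℝ, (γ = c ∨ γ = -c) ∧ ∀ t ∈ Set.Icc 0 T,
      l t ≤ l 0 * ((Real.exp (-γ * t) - Real.exp (-γ * T)) / (1 - Real.exp (-γ * T)))
          + l T * ((1 - Real.exp (-γ * t)) / (1 - Real.exp (-γ * T)))
          + 2 * Real.exp (c * T) / c := by
  rcases le_total (l 0) (l T) with h | h
  · refine ⟨c, Or.inl rfl, aux_case T c hT hc l l' l'' hl hl' hineq c (Or.inl rfl) ?_⟩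
    have hlt : Real.exp (-c * T) < 1 := by
      rw [Real.exp_lt_one_iff]
      nlinarith
    rw [div_nonpos_iff]
    right
    constructor <;> linarith
  · refine ⟨-c, Or.inr rfl, aux_case T c hT hc l l' l'' hl hl' hineq (-c) (Or.inr rfl) ?_⟩
    have hgt : (1:ℝ) < Real.exp (- -c * T) := by
      rw [Real.one_lt_exp_iff]
      nlinarith
    rw [div_nonpos_iff]
    left
    constructor <;> linarith
end

section
/- Let T, c, C, M > 0. Let q : [0,T] → (0,∞) be continuous and g : [0,T] → ℝ be integrable with |g(t)| ≤ 2C for almost every t ∈ [0,T]. Suppose that the function l(t) = log q(t) − ∫₀ᵗ g(s) ds is twice continuously differentiable on [0,T] and satisfies l''(t) + c·|l'(t)| + c ≥ 0 for all t ∈ (0,T). If q(0) ≤ M², then, taking γ = c in the definitions of λ₁ and λ₂, there exists λ ∈ {λ₁, λ₂} such that for every t ∈ [0,T]: √(q(t)) ≤ exp( e^{cT}/c + 2CT ) · M^{1 − λ(t)} · ( q(T) )^{λ(t)/2}. -/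
open Set Real Filter Topology


private lemma hasDerivAt_form' (c a b p m r : ℝ) (t : ℝ) :
    HasDerivAt (fun s => a + b*s + p*Real.exp (c*s) + m*(Real.exp (c*s))⁻¹ + r*(Real.exp (c*s))^2)
      (b + p*c*Real.exp (c*t) + m*(-c)*(Real.exp (c*t))⁻¹ + r*(2*c)*(Real.exp (c*t))^2) t := by
  have h1 : HasDerivAt (fun s : ℝ => c * s) c t := by
    simpa using (hasDerivAt_id t).const_mul c
  have e1 : HasDerivAt (fun s => Real.exp (c*s)) (Real.exp (c*t) * c) t := h1.exp
  have e2 : HasDerivAt (fun s => (Real.exp (c*s))⁻¹) ((Real.exp (c*t))⁻¹ * (-c)) t := by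
    simpa [Real.exp_neg] using h1.neg.exp
  have e3 : HasDerivAt (fun s => (Real.exp (c*s))^2) (2 * Real.exp (c*t) * (Real.exp (c*t) * c)) t := by
    simpa using e1.fun_pow 2
  have := ((((hasDerivAt_const t a).fun_add ((hasDerivAt_id t).const_mul b)).fun_add
    (e1.const_mul p)).fun_add (e2.const_mul m)).fun_add (e3.const_mul r)
  convert this using 1
  · rfl
  · rfl
  · rfl
  · ring


private lemma hasDerivAt_form (c a b p m r : ℝ) (t : ℝ) :
    HasDerivAt (fun s => a + b*s + p*Real.exp (c*s) + m*Real.exp (-(c*s)) + r*Real.exp (2*(c*s)))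
      (b + p*c*Real.exp (c*t) + m*(-c)*Real.exp (-(c*t)) + r*(2*c)*Real.exp (2*(c*t))) t := by
  have h1 : HasDerivAt (fun s : ℝ => c * s) c t := by
    simpa using (hasDerivAt_id t).const_mul c
  have e1 : HasDerivAt (fun s => Real.exp (c*s)) (Real.exp (c*t) * c) t := h1.exp
  have e2 : HasDerivAt (fun s => Real.exp (-(c*s))) (Real.exp (-(c*t)) * (-c)) t := h1.neg.exp
  have e3 : HasDerivAt (fun s => Real.exp (2*(c*s))) (Real.exp (2*(c*t)) * (2*c)) t := by
    have := (h1.const_mul 2).exp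
    simpa [mul_comm, mul_assoc] using this
  have := ((((hasDerivAt_const t a).fun_add ((hasDerivAt_id t).const_mul b)).fun_add
    (e1.const_mul p)).fun_add (e2.const_mul m)).fun_add (e3.const_mul r)
  convert this using 1
  · rfl
  · rfl
  · rfl
  · ring

private lemma max_principle (T c : ℝ) (hc : 0 < c)
    (l l' l'' w w' w'' : ℝ → ℝ)
    (hl : ∀ t ∈ Icc 0 T, HasDerivWithinAt l (l' t) (Icc 0 T) t)
    (hl' : ∀ t ∈ Icc 0 T, HasDerivWithinAt l' (l'' t) (Icc 0 T) t)
    (hw : ∀ t, HasDerivAt w (w' t) t)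
    (hw' : ∀ t, HasDerivAt w' (w'' t) t)
    (hsub : ∀ t ∈ Ioo 0 T, 0 ≤ l'' t + c * |l' t| + c)
    (hsup : ∀ t ∈ Ioo 0 T, w'' t + c * |w' t| + c < 0)
    (h0 : l 0 ≤ w 0) (hTe : l T ≤ w T) :
    ∀ t ∈ Icc 0 T, l t ≤ w t := by
  rcases le_or_gt T 0 with hT0 | hT0
  · intro t ht
    have h1 : t = 0 := le_antisymm (ht.2.trans hT0) ht.1
    simpa [h1] using h0
  set z : ℝ → ℝ := fun t => l t - w t with hz
  have hzc : ContinuousOn z (Icc 0 T) := fun t ht =>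
    ((hl t ht).continuousWithinAt).sub (hw t).continuousAt.continuousWithinAt
  obtain ⟨t₀, ht₀, hmax⟩ := isCompact_Icc.exists_isMaxOn ⟨0, left_mem_Icc.2 hT0.le⟩ hzc
  suffices hz0 : z t₀ ≤ 0 by
    intro t ht
    have h2 : z t ≤ z t₀ := hmax ht
    simp only [z] at h2 hz0 ⊢
    linarith
  rcases eq_or_lt_of_le ht₀.1 with h0' | h0'
  · simpa [z, ← h0'] using h0
  rcases eq_or_lt_of_le ht₀.2 with hT' | hT'
  · simpa [z, hT'] using hTe
  exfalso
  have ht₀i : t₀ ∈ Ioo (0:ℝ) T := ⟨h0', hT'⟩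
  have hnhds : Icc (0:ℝ) T ∈ 𝓝 t₀ := Icc_mem_nhds h0' hT'
  have hz1 : HasDerivAt z (l' t₀ - w' t₀) t₀ :=
    (((hl t₀ ht₀).hasDerivAt hnhds)).sub (hw t₀)
  have hloc : IsLocalMax z t₀ := hmax.isLocalMax hnhds
  have hcrit : l' t₀ - w' t₀ = 0 := hloc.hasDerivAt_eq_zero hz1
  have habs : |l' t₀| = |w' t₀| := by rw [show l' t₀ = w' t₀ by linarith]
  have hpos : 0 < l'' t₀ - w'' t₀ := by
    have h1 := hsub t₀ ht₀i
    have h2 := hsup t₀ ht₀i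
    rw [habs] at h1; linarith
  set z' : ℝ → ℝ := fun t => l' t - w' t with hz'def
  have hz2 : HasDerivAt z' (l'' t₀ - w'' t₀) t₀ :=
    ((hl' t₀ ht₀).hasDerivAt hnhds).sub (hw' t₀)
  have hslope : ∀ᶠ s in 𝓝[≠] t₀, 0 < slope z' t₀ s :=
    (hasDerivAt_iff_tendsto_slope.mp hz2).eventually (lt_mem_nhds hpos)
  have hslope' : ∀ᶠ s in 𝓝[>] t₀, 0 < slope z' t₀ s :=
    hslope.filter_mono (nhdsWithin_mono t₀ fun x hx => ne_of_gt hx)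
  have hIoo : Ioo t₀ T ∈ 𝓝[>] t₀ := Ioo_mem_nhdsGT_of_mem ⟨le_refl t₀, hT'⟩
  obtain ⟨a, ha, hsubs⟩ := mem_nhdsGT_iff_exists_Ioc_subset.mp (hslope'.and hIoo)
  have haIoo : a ∈ Ioo t₀ T := (hsubs ⟨ha, le_refl a⟩).2
  have hz'pos : ∀ s ∈ Ioc t₀ a, 0 < z' s := by
    intro s hs
    obtain ⟨hsl, hsio⟩ := hsubs hs
    have hd : 0 < s - t₀ := by linarith [hs.1]
    have heq : slope z' t₀ s = (z' s - z' t₀) / (s - t₀) := by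
      simp [slope_def_field]
    rw [heq] at hsl
    have hcrit' : z' t₀ = 0 := by simp only [z']; linarith
    rcases div_pos_iff.mp hsl with ⟨h1, _⟩ | ⟨_, h2⟩
    · linarith
    · linarith
  have hmono : StrictMonoOn z (Icc t₀ a) := by
    apply strictMonoOn_of_deriv_pos (convex_Icc t₀ a)
    · exact hzc.mono (Icc_subset_Icc h0'.le haIoo.2.le)
    · intro x hx
      rw [interior_Icc] at hx
      have hxI : x ∈ Icc (0:ℝ) T := ⟨by linarith [hx.1], by linarith [hx.2, haIoo.2]⟩
      have hdx : HasDerivAt z (z' x) x :=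
        ((hl x hxI).hasDerivAt (Icc_mem_nhds (by linarith [hx.1]) (by linarith [hx.2, haIoo.2]))).sub (hw x)
      rw [hdx.deriv]
      exact hz'pos x ⟨hx.1, hx.2.le⟩
  have hlt : z t₀ < z a := hmono (left_mem_Icc.2 (le_of_lt ha)) (right_mem_Icc.2 (le_of_lt ha)) ha
  have hle : z a ≤ z t₀ := hmax ⟨by linarith [ht₀.1, haIoo.1], haIoo.2.le⟩
  linarith

private lemma bound_case1 (T c : ℝ) (hT : 0 < T) (hc : 0 < c)
    (l l' l'' : ℝ → ℝ)
    (hl : ∀ t ∈ Icc 0 T, HasDerivWithinAt l (l' t) (Icc 0 T) t)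
    (hl' : ∀ t ∈ Icc 0 T, HasDerivWithinAt l' (l'' t) (Icc 0 T) t)
    (hsub : ∀ t ∈ Ioo 0 T, 0 ≤ l'' t + c * |l' t| + c)
    (hΔ : l 0 ≤ l T) :
    ∀ t ∈ Icc 0 T,
      l t ≤ (1 - (1 - (Real.exp (c*t))⁻¹) / (1 - (Real.exp (c*T))⁻¹)) * l 0
        + ((1 - (Real.exp (c*t))⁻¹) / (1 - (Real.exp (c*T))⁻¹)) * l T
        + 2 * Real.exp (c*T) / c := by
  have hc0 : c ≠ 0 := ne_of_gt hc
  obtain ⟨E, hE⟩ : ∃ E, E = Real.exp (c*T) := ⟨_, rfl⟩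
  have hEpos : 0 < E := hE ▸ Real.exp_pos _
  have hE1 : c*T + 1 ≤ E := by
    have := Real.add_one_le_exp (c*T); rw [hE]; linarith
  have hEgt1 : 1 < E := by nlinarith
  have hEinvlt1 : E⁻¹ < 1 := by
    rw [inv_lt_one_iff₀]; right; exact hEgt1
  have hEinvpos : 0 < E⁻¹ := inv_pos.2 hEpos
  have hE0 : E ≠ 0 := ne_of_gt hEpos
  have hD : 0 < 1 - E⁻¹ := by linarith
  have hD0 : (1:ℝ) - E⁻¹ ≠ 0 := ne_of_gt hD
  obtain ⟨A, hA⟩ : ∃ A, A = l 0 := ⟨_, rfl⟩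
  obtain ⟨Δ, hΔdef⟩ : ∃ d, d = (l T - l 0) / (1 - E⁻¹) := ⟨_, rfl⟩
  have hΔ0 : 0 ≤ Δ := by rw [hΔdef]; exact div_nonneg (by linarith) hD.le
  have hΔD : Δ * (1 - E⁻¹) = l T - l 0 := by
    rw [hΔdef, div_mul_cancel₀ _ hD0]
  -- supersolution
  have key := max_principle T c hc l l' l''
    (fun s => (A + Δ + 2*E/c - T) + 1*s + (-(1/c))*Real.exp (c*s)
        + (-Δ)*(Real.exp (c*s))⁻¹ + (-(E⁻¹/c))*(Real.exp (c*s))^2)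
    (fun s => 1 + 0*s + (-(1/c)*c)*Real.exp (c*s)
        + (-Δ*(-c))*(Real.exp (c*s))⁻¹ + (-(E⁻¹/c)*(2*c))*(Real.exp (c*s))^2)
    (fun s => 0 + (-(1/c)*c*c)*Real.exp (c*s)
        + (-Δ*(-c)*(-c))*(Real.exp (c*s))⁻¹ + (-(E⁻¹/c)*(2*c)*(2*c))*(Real.exp (c*s))^2)
    hl hl'
    (by
      intro t
      have h := hasDerivAt_form' c (A + Δ + 2*E/c - T) 1 (-(1/c)) (-Δ) (-(E⁻¹/c)) t
      convert h using 1 <;> ring)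
    (by
      intro t
      have h := hasDerivAt_form' c 1 0 (-(1/c)*c) (-Δ*(-c)) (-(E⁻¹/c)*(2*c)) t
      convert h using 1 <;> ring)
    hsub
    (by
      intro t ht
      obtain ⟨X, hX⟩ : ∃ X, X = Real.exp (c*t) := ⟨_, rfl⟩
      rw [← hX]
      have hXpos : 0 < X := hX ▸ Real.exp_pos _
      have hX1 : 1 ≤ X := by
        rw [hX]; exact Real.one_le_exp (by nlinarith [ht.1])
      have hXinvpos : 0 < X⁻¹ := inv_pos.2 hXpos
      have hr1 : (-(1/c)*c) = -1 := by field_simp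
      have hr2 : (-(E⁻¹/c)*(2*c)) = -(2*E⁻¹) := by field_simp
      have hr3 : (-Δ*(-c)) = c*Δ := by ring
      rw [hr1, hr2, hr3]
      have habs : |1 + 0*t + (-1)*X + (c*Δ)*X⁻¹ + (-(2*E⁻¹))*X^2|
          ≤ (X - 1 + 2*E⁻¹*X^2) + (c*Δ)*X⁻¹ := by
        rw [abs_le]
        constructor
        · nlinarith [mul_nonneg (mul_nonneg hc.le hΔ0) hXinvpos.le,
            mul_nonneg hEinvpos.le (sq_nonneg X)]
        · nlinarith [mul_nonneg (mul_nonneg hc.le hΔ0) hXinvpos.le,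
            mul_nonneg hEinvpos.le (sq_nonneg X)]
      have hcabs := mul_le_mul_of_nonneg_left habs hc.le
      nlinarith [hcabs, mul_pos (mul_pos hc hEinvpos) (pow_pos hXpos 2)]
    )
    (by
      simp only [mul_zero, Real.exp_zero, inv_one, one_pow, mul_one, mul_zero]
      have hEinvle1 : E⁻¹ ≤ 1 := hEinvlt1.le
      have h2 : 0 ≤ (2*E - c*T - 1 - E⁻¹)/c := div_nonneg (by nlinarith) hc.le
      have h3 : 2*E/c - 1/c - E⁻¹/c = (2*E - c*T - 1 - E⁻¹)/c + T := by
        field_simp; ring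
      rw [hA]; nlinarith [h2, h3])
    (by
      rw [← hE, hA]
      have hEE : E⁻¹ * E^2 = E := by
        rw [sq, ← mul_assoc, inv_mul_cancel₀ hE0, one_mul]
      have hEc : (-(E⁻¹/c)) * E^2 = -(E/c) := by
        rw [neg_mul, div_mul_eq_mul_div, hEE]
      rw [hEc]
      have hgoal : l 0 + Δ + 2 * E / c - T + 1 * T + -(1 / c) * E + -Δ * E⁻¹ + -(E / c) = l T := by
        linear_combination hΔD
      linarith [hgoal]
      )
  intro t ht
  have h1 := key t ht
  obtain ⟨X, hX⟩ : ∃ X, X = Real.exp (c*t) := ⟨_, rfl⟩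
  rw [← hX, ← hE, ← hA]
  have hXpos : 0 < X := hX ▸ Real.exp_pos _
  have hX0 : X ≠ 0 := ne_of_gt hXpos
  rw [← hX] at h1
  have hlam : (1 - (1 - X⁻¹) / (1 - E⁻¹)) * A + ((1 - X⁻¹) / (1 - E⁻¹)) * l T
      = A + Δ*(1 - X⁻¹) := by
    rw [hΔdef, hA]; ring
  rw [hlam]
  have h4 : 0 ≤ X/c := by positivity
  have h5 : 0 ≤ (E⁻¹/c)*X^2 := by positivity
  have h6 : t ≤ T := ht.2
  ring_nf at h1 h4 h5 ⊢
  linarith [h1, h4, h5, h6]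

private lemma bound_case2 (T c : ℝ) (hT : 0 < T) (hc : 0 < c)
    (l l' l'' : ℝ → ℝ)
    (hl : ∀ t ∈ Icc 0 T, HasDerivWithinAt l (l' t) (Icc 0 T) t)
    (hl' : ∀ t ∈ Icc 0 T, HasDerivWithinAt l' (l'' t) (Icc 0 T) t)
    (hsub : ∀ t ∈ Ioo 0 T, 0 ≤ l'' t + c * |l' t| + c)
    (hΔ : l T ≤ l 0) :
    ∀ t ∈ Icc 0 T,
      l t ≤ (1 - (Real.exp (c*t) - 1) / (Real.exp (c*T) - 1)) * l 0
        + ((Real.exp (c*t) - 1) / (Real.exp (c*T) - 1)) * l T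
        + 2 * Real.exp (c*T) / c := by
  have hc0 : c ≠ 0 := ne_of_gt hc
  obtain ⟨E, hE⟩ : ∃ E, E = Real.exp (c*T) := ⟨_, rfl⟩
  have hEpos : 0 < E := hE ▸ Real.exp_pos _
  have hE1 : c*T + 1 ≤ E := by
    have := Real.add_one_le_exp (c*T); rw [hE]; linarith
  have hEgt1 : 1 < E := by nlinarith
  have hEinvlt1 : E⁻¹ < 1 := by
    rw [inv_lt_one_iff₀]; right; exact hEgt1
  have hEinvpos : 0 < E⁻¹ := inv_pos.2 hEpos
  have hE0 : E ≠ 0 := ne_of_gt hEpos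
  have hD : 0 < E - 1 := by linarith
  have hD0 : E - (1:ℝ) ≠ 0 := ne_of_gt hD
  obtain ⟨A, hA⟩ : ∃ A, A = l 0 := ⟨_, rfl⟩
  obtain ⟨Δ, hΔdef⟩ : ∃ d, d = (l T - l 0) / (E - 1) := ⟨_, rfl⟩
  have hΔ0 : Δ ≤ 0 := by
    rw [hΔdef]
    exact div_nonpos_of_nonpos_of_nonneg (by linarith) hD.le
  have hΔD : Δ * (E - 1) = l T - l 0 := by
    rw [hΔdef, div_mul_cancel₀ _ hD0]
  have key := max_principle T c hc l l' l''
    (fun s => (A - Δ + 2*E/c - T) + 1*s + (Δ - 1/c)*Real.exp (c*s)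
        + 0*(Real.exp (c*s))⁻¹ + (-(E⁻¹/c))*(Real.exp (c*s))^2)
    (fun s => 1 + 0*s + ((Δ - 1/c)*c)*Real.exp (c*s)
        + (0*(-c))*(Real.exp (c*s))⁻¹ + (-(E⁻¹/c)*(2*c))*(Real.exp (c*s))^2)
    (fun s => 0 + ((Δ - 1/c)*c*c)*Real.exp (c*s)
        + (0*(-c)*(-c))*(Real.exp (c*s))⁻¹ + (-(E⁻¹/c)*(2*c)*(2*c))*(Real.exp (c*s))^2)
    hl hl'
    (by
      intro t
      have h := hasDerivAt_form' c (A - Δ + 2*E/c - T) 1 (Δ - 1/c) 0 (-(E⁻¹/c)) t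
      convert h using 1 <;> ring)
    (by
      intro t
      have h := hasDerivAt_form' c 1 0 ((Δ - 1/c)*c) (0*(-c)) (-(E⁻¹/c)*(2*c)) t
      convert h using 1 <;> ring)
    hsub
    (by
      intro t ht
      obtain ⟨X, hX⟩ : ∃ X, X = Real.exp (c*t) := ⟨_, rfl⟩
      rw [← hX]
      have hXpos : 0 < X := hX ▸ Real.exp_pos _
      have hX1 : 1 ≤ X := by
        rw [hX]; exact Real.one_le_exp (by nlinarith [ht.1])
      have hXinvpos : 0 < X⁻¹ := inv_pos.2 hXpos
      have hr2 : (-(E⁻¹/c)*(2*c)) = -(2*E⁻¹) := by field_simp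
      have hr4 : ((Δ - 1/c)*c) = c*Δ - 1 := by field_simp
      have hr5 : ((Δ - 1/c)*c*c) = (c*Δ - 1)*c := by rw [hr4]
      rw [hr2, hr5, hr4]
      have habs : |1 + 0*t + (c*Δ - 1)*X + 0*(-c)*X⁻¹ + (-(2*E⁻¹))*X^2|
          ≤ (X - 1 + 2*E⁻¹*X^2) + (-(c*Δ))*X := by
        rw [abs_le]
        constructor
        · nlinarith [mul_nonneg (mul_nonneg hc.le (neg_nonneg.2 hΔ0)) hXpos.le,
            mul_nonneg hEinvpos.le (sq_nonneg X)]
        · nlinarith [mul_nonneg (mul_nonneg hc.le (neg_nonneg.2 hΔ0)) hXpos.le,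
            mul_nonneg hEinvpos.le (sq_nonneg X)]
      have hcabs := mul_le_mul_of_nonneg_left habs hc.le
      nlinarith [hcabs, mul_pos (mul_pos hc hEinvpos) (pow_pos hXpos 2)]
    )
    (by
      simp only [mul_zero, Real.exp_zero, inv_one, one_pow, mul_one, mul_zero]
      have hEinvle1 : E⁻¹ ≤ 1 := hEinvlt1.le
      have h2 : 0 ≤ (2*E - c*T - 1 - E⁻¹)/c := div_nonneg (by nlinarith) hc.le
      have h3 : 2*E/c - 1/c - E⁻¹/c = (2*E - c*T - 1 - E⁻¹)/c + T := by
        field_simp; ring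
      rw [hA]; nlinarith [h2, h3])
    (by
      rw [← hE, hA]
      have hEE : E⁻¹ * E^2 = E := by
        rw [sq, ← mul_assoc, inv_mul_cancel₀ hE0, one_mul]
      have hEc : (-(E⁻¹/c)) * E^2 = -(E/c) := by
        rw [neg_mul, div_mul_eq_mul_div, hEE]
      rw [hEc]
      have hgoal : l 0 - Δ + 2 * E / c - T + 1 * T + (Δ - 1/c) * E + 0*E⁻¹ + -(E / c) = l T := by
        linear_combination hΔD
      linarith [hgoal]
      )
  intro t ht
  have h1 := key t ht
  obtain ⟨X, hX⟩ : ∃ X, X = Real.exp (c*t) := ⟨_, rfl⟩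
  rw [← hX, ← hE, ← hA]
  have hXpos : 0 < X := hX ▸ Real.exp_pos _
  have hX0 : X ≠ 0 := ne_of_gt hXpos
  rw [← hX] at h1
  have hlam : (1 - (X - 1) / (E - 1)) * A + ((X - 1) / (E - 1)) * l T
      = A + Δ*(X - 1) := by
    rw [hΔdef, hA]; ring
  rw [hlam]
  have h4 : 0 ≤ X/c := by positivity
  have h5 : 0 ≤ (E⁻¹/c)*X^2 := by positivity
  have h6 : t ≤ T := ht.2
  ring_nf at h1 h4 h5 ⊢
  linarith [h1, h4, h5, h6]



/-- Logarithmic convexity estimate: if `l(t) = log q(t) - ∫₀ᵗ g` is twice continuously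
differentiable and satisfies `l'' + c|l'| + c ≥ 0` on `(0,T)`, with `|g| ≤ 2C` a.e. on
`[0,T]` and `q(0) ≤ M²`, then, with `γ = c` in the definition of `λ₁` and `λ₂`, there is
`λ ∈ {λ₁, λ₂}` such that `√(q(t)) ≤ exp(e^{cT}/c + 2CT) M^{1-λ(t)} q(T)^{λ(t)/2}`. -/
theorem log_convexity_conditional_stability
    (T c C M : ℝ) (hT : 0 < T) (hc : 0 < c) (hC : 0 < C) (hM : 0 < M)
    (q : ℝ → ℝ) (hqc : ContinuousOn q (Set.Icc 0 T))
    (hqpos : ∀ t ∈ Set.Icc 0 T, 0 < q t)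
    (g : ℝ → ℝ) (hg : IntervalIntegrable g MeasureTheory.volume 0 T)
    (hgbd : ∀ᵐ t ∂(MeasureTheory.volume.restrict (Set.Icc 0 T)), |g t| ≤ 2 * C)
    (l l' l'' : ℝ → ℝ)
    (hldef : ∀ t ∈ Set.Icc 0 T, l t = Real.log (q t) - ∫ s in (0:ℝ)..t, g s)
    (hl : ∀ t ∈ Set.Icc 0 T, HasDerivWithinAt l (l' t) (Set.Icc 0 T) t)
    (hl' : ∀ t ∈ Set.Icc 0 T, HasDerivWithinAt l' (l'' t) (Set.Icc 0 T) t)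
    (hl''c : ContinuousOn l'' (Set.Icc 0 T))
    (hineq : ∀ t ∈ Set.Ioo 0 T, 0 ≤ l'' t + c * |l' t| + c)
    (hq0 : q 0 ≤ M ^ 2) :
    ∃ lam : ℝ → ℝ,
      ((∀ t, lam t = (1 - Real.exp (-c * t)) / (1 - Real.exp (-c * T))) ∨
       (∀ t, lam t = (Real.exp (c * t) - 1) / (Real.exp (c * T) - 1))) ∧
      ∀ t ∈ Set.Icc 0 T,
        Real.sqrt (q t) ≤ Real.exp (Real.exp (c * T) / c + 2 * C * T)
          * M ^ (1 - lam t) * (q T) ^ (lam t / 2) := by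
  have hT0mem : (0:ℝ) ∈ Icc 0 T := left_mem_Icc.2 hT.le
  have hTmem : T ∈ Icc 0 T := right_mem_Icc.2 hT.le
  -- bound on the integral of g
  have hIbound : ∀ t ∈ Icc 0 T, |∫ s in (0:ℝ)..t, g s| ≤ 2*C*T := by
    intro t ht
    have hsub : Set.uIcc (0:ℝ) t ⊆ Set.uIcc (0:ℝ) T := by
      rw [Set.uIcc_of_le ht.1, Set.uIcc_of_le (ht.1.trans ht.2)]
      exact Icc_subset_Icc le_rfl ht.2
    have hint : IntervalIntegrable g MeasureTheory.volume 0 t := hg.mono_set hsub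
    have hae : ∀ᵐ s ∂(MeasureTheory.volume.restrict (Set.uIoc (0:ℝ) t)), ‖g s‖ ≤ 2*C := by
      have hsub2 : Set.uIoc (0:ℝ) t ⊆ Icc 0 T := by
        rw [Set.uIoc_of_le ht.1]
        exact Set.Ioc_subset_Icc_self.trans (Icc_subset_Icc le_rfl ht.2)
      exact (MeasureTheory.ae_restrict_of_ae_restrict_of_subset hsub2 hgbd).mono
        (fun x hx => by simpa [Real.norm_eq_abs] using hx)
    have h := intervalIntegral.norm_integral_le_abs_of_norm_le hae
      (intervalIntegrable_const (c := 2*C))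
    rw [intervalIntegral.integral_const, smul_eq_mul] at h
    rw [Real.norm_eq_abs] at h
    have h2 : |(t - 0) * (2*C)| = t * (2*C) := by
      rw [abs_of_nonneg (by nlinarith [ht.1])]; ring
    rw [h2] at h
    nlinarith [ht.2, hC]
  have hl0 : l 0 = Real.log (q 0) := by
    rw [hldef 0 hT0mem, intervalIntegral.integral_same, sub_zero]
  -- the intermediate bound
  obtain ⟨lam, hform, h01, hbound⟩ :
      ∃ lam : ℝ → ℝ,
        ((∀ t, lam t = (1 - Real.exp (-c * t)) / (1 - Real.exp (-c * T))) ∨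
         (∀ t, lam t = (Real.exp (c * t) - 1) / (Real.exp (c * T) - 1))) ∧
        (∀ t ∈ Icc 0 T, 0 ≤ lam t ∧ lam t ≤ 1) ∧
        (∀ t ∈ Icc 0 T, l t ≤ (1 - lam t) * l 0 + lam t * l T + 2*Real.exp (c*T)/c) := by
    have hcommon : ∀ t ∈ Icc 0 T, Real.exp (c*t) ≤ Real.exp (c*T) ∧ 1 ≤ Real.exp (c*t) := by
      intro t ht
      constructor
      · exact Real.exp_le_exp.2 (mul_le_mul_of_nonneg_left ht.2 hc.le)
      · exact Real.one_le_exp (mul_nonneg hc.le ht.1)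
    have hEgt1 : 1 < Real.exp (c*T) := by
      have := Real.add_one_le_exp (c*T); nlinarith
    rcases le_total (l 0) (l T) with hcase | hcase
    · have hconv : ∀ s : ℝ, (1 - Real.exp (-c*s))/(1 - Real.exp (-c*T))
          = (1 - (Real.exp (c*s))⁻¹)/(1 - (Real.exp (c*T))⁻¹) := by
        intro s; rw [neg_mul, neg_mul, Real.exp_neg, Real.exp_neg]
      refine ⟨fun s => (1 - Real.exp (-c*s))/(1 - Real.exp (-c*T)),
        Or.inl (fun t => rfl), ?_, ?_⟩
      · intro t ht
        obtain ⟨hXE, hX1⟩ := hcommon t ht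
        have hXpos : 0 < Real.exp (c*t) := Real.exp_pos _
        have hEpos : 0 < Real.exp (c*T) := Real.exp_pos _
        have hXinv : (Real.exp (c*t))⁻¹ ≤ 1 := inv_le_one_of_one_le₀ hX1
        have hEinvX : (Real.exp (c*T))⁻¹ ≤ (Real.exp (c*t))⁻¹ := inv_anti₀ hXpos hXE
        have hEinv1 : (Real.exp (c*T))⁻¹ < 1 := by
          rw [inv_lt_one_iff₀]; right; exact hEgt1
        simp only [hconv t]
        constructor
        · exact div_nonneg (by linarith) (by linarith)
        · rw [div_le_one (by linarith)]; linarith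
      · intro t ht
        simp only [hconv t]
        exact bound_case1 T c hT hc l l' l'' hl hl' hineq hcase t ht
    · refine ⟨fun s => (Real.exp (c*s) - 1)/(Real.exp (c*T) - 1),
        Or.inr (fun t => rfl), ?_, ?_⟩
      · intro t ht
        obtain ⟨hXE, hX1⟩ := hcommon t ht
        simp only []
        constructor
        · exact div_nonneg (by linarith) (by linarith)
        · rw [div_le_one (by linarith)]; linarith
      · intro t ht
        exact bound_case2 T c hT hc l l' l'' hl hl' hineq hcase t ht
  refine ⟨lam, hform, fun t ht => ?_⟩
  obtain ⟨hlam0, hlam1⟩ := h01 t ht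
  have hqt : 0 < q t := hqpos t ht
  have hqT : 0 < q T := hqpos T hTmem
  have hq0p : 0 < q 0 := hqpos 0 hT0mem
  have hIt := hIbound t ht
  have hIT := hIbound T hTmem
  have hlt : l t = Real.log (q t) - ∫ s in (0:ℝ)..t, g s := hldef t ht
  have hlT : l T = Real.log (q T) - ∫ s in (0:ℝ)..T, g s := hldef T hTmem
  have hlogM : Real.log (q 0) ≤ 2 * Real.log M := by
    have h1 : Real.log (q 0) ≤ Real.log (M^2) := by
      rw [Real.log_le_log_iff hq0p (by positivity)]; exact hq0
    rwa [Real.log_pow, Nat.cast_ofNat] at h1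
  have hbt := hbound t ht
  -- key log inequality
  have hkey : Real.log (q t) * (1/2) ≤ (Real.exp (c*T)/c + 2*C*T)
      + Real.log M * (1 - lam t) + Real.log (q T) * (lam t / 2) := by
    have e1 : Real.log (q t) = l t + ∫ s in (0:ℝ)..t, g s := by rw [hlt]; ring
    have e2 : lam t * l T = lam t * Real.log (q T) - lam t * (∫ s in (0:ℝ)..T, g s) := by
      rw [hlT]; ring
    have p1 : (1 - lam t) * l 0 ≤ (1 - lam t) * (2 * Real.log M) := by
      rw [hl0]
      exact mul_le_mul_of_nonneg_left hlogM (by linarith)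
    have p2 : - (lam t * (∫ s in (0:ℝ)..T, g s)) ≤ lam t * (2*C*T) := by
      have := mul_le_mul_of_nonneg_left (neg_le_abs (∫ s in (0:ℝ)..T, g s)) hlam0
      nlinarith [hIT, hlam0]
    have p3 : lam t * (2*C*T) ≤ 2*C*T := by
      nlinarith [mul_nonneg (sub_nonneg.2 hlam1)
        (mul_nonneg (mul_nonneg (by norm_num : (0:ℝ) ≤ 2) hC.le) hT.le)]
    have p4 : (∫ s in (0:ℝ)..t, g s) ≤ 2*C*T := (abs_le.1 hIt).2
    ring_nf at hbt e1 e2 p1 p2 p3 p4 ⊢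
    linarith [hbt, p1, p2, p3, p4, e1, e2]
  -- convert to the exponential form
  have hERpos : (0:ℝ) < Real.exp (Real.exp (c * T) / c + 2 * C * T) := Real.exp_pos _
  rw [Real.sqrt_eq_rpow, Real.rpow_def_of_pos hqt, Real.rpow_def_of_pos hM,
    Real.rpow_def_of_pos hqT, ← Real.exp_add, ← Real.exp_add, Real.exp_le_exp]
  calc Real.log (q t) * (1/2)
      ≤ (Real.exp (c*T)/c + 2*C*T) + Real.log M * (1 - lam t)
        + Real.log (q T) * (lam t / 2) := hkey
    _ = Real.exp (c * T) / c + 2 * C * T + Real.log M * (1 - lam t)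
        + Real.log (q T) * (lam t / 2) := by ring
end
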